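/- arXiv:2011.13016 — 2 statements merged into one kernel-verified Lean document; each statement's English description precedes it below -/
import Mathlib

section
/- Let p be a prime and m a positive integer with (p, m) ≠ (3, 2), let F be a finite field with p^m elements, and ω a generator of F^×. Let ΓL₁(p^m) denote the subgroup of the permutation group of F generated by the Frobenius map x ↦ x^p and the map x ↦ ω·x. Let A be a subgroup of ΓL₁(p^m) acting transitively on F \ {0}, and let N be an abelian normal subgroup of A. Then N is contained in the subgroup of ΓL₁(p^m) consisting of all multiplication maps x ↦ c·x with c ∈ F^×. In particular, the intersection of A with the group of multiplication maps is the unique largest abelian normal subgroup of A. -/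
/-!
Every element of `ΓL₁(p^m)` is `x ↦ c * x ^ p ^ i` with `i < m`. Suppose `n ∈ N` has this form
with `i ≠ 0` and put `σ = p ^ i`. By transitivity each `a ∈ Fˣ` is `g 1` for some `g ∈ A`,
`g x = a * x ^ p ^ j`; then `g n g⁻¹ ∈ N` is `x ↦ e * x ^ σ` with `e = a * c ^ p ^ j / a ^ σ`,
and it commutes with `n` only if `(e / c) ^ (σ - 1) = 1`, i.e. `a ^ (σ - 1) ^ 2 = u ^ p ^ j / u`
with `u = c ^ (σ - 1)`. So the image of `a ↦ a ^ (σ - 1) ^ 2` on the cyclic group `Fˣ` has at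
most `m` elements, whence `p ^ m - 1 ≤ m * gcd (p ^ m - 1) ((σ - 1) ^ 2)`. Writing `d = gcd i m`
and `m = d * t`, this gcd is at most `(p ^ d - 1) * gcd t (p ^ d - 1)`, while
`p ^ m - 1 = (p ^ d - 1) * ∑ k < t, p ^ (d * k)`, and an elementary estimate shows that this is
impossible unless `(p, m) = (3, 2)`.
-/

def mulMapsSubgroup (F : Type*) [Field F] : Subgroup (Equiv.Perm F) :=
  Subgroup.closure {e : Equiv.Perm F | ∃ c : Fˣ, ∀ x : F, e x = (c : F) * x}

open Finset

namespace Nat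

lemma geom_sum_modEq (P t : ℕ) (hP : 1 ≤ P) : ∑ k ∈ range t, P ^ k ≡ t [MOD P - 1] := by
  have hP1 : P ≡ 1 [MOD P - 1] := Nat.modEq_sub hP
  calc ∑ k ∈ range t, P ^ k ≡ ∑ k ∈ range t, 1 ^ k [MOD P - 1] :=
        Nat.ModEq.sum fun k _ => hP1.pow k
    _ = t := by simp

lemma sub_one_mul_geom_sum (P t : ℕ) (hP : 1 ≤ P) :
    (P - 1) * ∑ k ∈ range t, P ^ k = P ^ t - 1 := by
  have h := geom_sum_mul_add (P - 1) t
  rw [Nat.sub_add_cancel hP] at h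
  rw [mul_comm]
  omega

lemma gcd_pow_sub_one_sq_dvd (p i d t : ℕ) (hp : 1 ≤ p) (hd : Nat.gcd i (d * t) = d) :
    Nat.gcd (p ^ (d * t) - 1) ((p ^ i - 1) ^ 2) ∣ (p ^ d - 1) * Nat.gcd t (p ^ d - 1) := by
  have hP : 1 ≤ p ^ d := Nat.one_le_pow _ _ hp
  have hsq : Nat.gcd (p ^ (d * t) - 1) ((p ^ i - 1) ^ 2) ∣ (p ^ d - 1) ^ 2 := by
    have hg : Nat.gcd (p ^ i - 1) (p ^ (d * t) - 1) = p ^ d - 1 := by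
      rw [Nat.pow_sub_one_gcd_pow_sub_one, hd]
    rw [Nat.gcd_comm, ← hg]
    exact gcd_pow_left_dvd_pow_gcd (α := ℕ)
  have hgcd :
      Nat.gcd ((p ^ d - 1) ^ 2) (p ^ (d * t) - 1) = (p ^ d - 1) * Nat.gcd t (p ^ d - 1) := by
    rw [pow_mul, ← sub_one_mul_geom_sum _ t hP, sq, Nat.gcd_mul_left, Nat.gcd_comm,
      (geom_sum_modEq _ t hP).gcd_eq]
  exact hgcd ▸ Nat.dvd_gcd hsq (Nat.gcd_dvd_left _ _)

lemma one_add_add_pow_le_geom_sum (P n : ℕ) :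
    1 + P + P ^ (n + 2) ≤ ∑ k ∈ range (n + 3), P ^ k := by
  rw [sum_range_succ]
  gcongr
  calc 1 + P = ∑ k ∈ range 2, P ^ k := by simp [sum_range_succ]
    _ ≤ ∑ k ∈ range (n + 2), P ^ k := sum_le_sum_of_subset (range_subset_range.2 (by omega))

lemma mul_sq_lt_pow_add {P d : ℕ} (hP : 3 ≤ P) (hdP : 2 * d ≤ P) (n : ℕ) :
    d * (n + 3) ^ 2 < P ^ (n + 2) + P := by
  induction n with
  | zero =>
    rcases (show d ≤ 1 ∨ 2 ≤ d by omega) with hd | hd <;> norm_num <;> nlinarith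
  | succ n ih =>
    have hPn : P ≤ P ^ (n + 2) := Nat.le_self_pow (by omega) P
    have hsq : d * (n + 1 + 3) ^ 2 ≤ 2 * (d * (n + 3) ^ 2) := by
      rw [← mul_assoc, mul_comm 2 d, mul_assoc]
      exact Nat.mul_le_mul_left d (by ring_nf; nlinarith)
    rw [show n + 1 + 2 = (n + 2) + 1 by ring, pow_succ P (n + 2)]
    nlinarith

lemma four_mul_lt_one_add_pow {p d : ℕ} (hp : 3 ≤ p) (hd : 1 ≤ d) (h : ¬(p = 3 ∧ d = 1)) :
    4 * d < 1 + p ^ d := by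
  obtain rfl | ⟨e, rfl⟩ : d = 1 ∨ ∃ e, d = e + 2 := by
    rcases d with _ | _ | e <;> simp_all
  · rw [pow_one]; omega
  · have h3 : 3 ^ (e + 2) ≤ p ^ (e + 2) := Nat.pow_le_pow_left hp _
    have he : e < 3 ^ e := Nat.lt_pow_self (by norm_num)
    rw [pow_add] at h3
    omega

lemma mul_gcd_lt_geom_sum {p d t : ℕ} (hp : 2 ≤ p) (hd : 1 ≤ d) (ht : 2 ≤ t)
    (hexc : ¬(p = 3 ∧ d = 1 ∧ t = 2)) :
    d * t * Nat.gcd t (p ^ d - 1) < ∑ k ∈ range t, (p ^ d) ^ k := by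
  have h2d : 2 * d ≤ p ^ d := (Nat.mul_le_pow (by norm_num) d).trans (Nat.pow_le_pow_left hp d)
  obtain rfl | ⟨n, rfl⟩ : t = 2 ∨ ∃ n, t = n + 3 := by
    rcases t with _ | _ | _ | n <;> simp_all
  · simp only [sum_range_succ, sum_range_zero, pow_zero, pow_one, zero_add]
    rcases (Nat.dvd_prime Nat.prime_two).1 (Nat.gcd_dvd_left 2 (p ^ d - 1)) with h1 | h2
    · rw [h1]; omega
    · have hodd : 2 ∣ p ^ d - 1 := h2 ▸ Nat.gcd_dvd_right 2 (p ^ d - 1)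
      have hp3 : 3 ≤ p := by
        rcases hp.eq_or_lt with rfl | hp3
        · have : 2 ∣ 2 ^ d := dvd_pow_self 2 (by omega)
          omega
        · exact hp3
      have := four_mul_lt_one_add_pow hp3 hd (fun h => hexc ⟨h.1, h.2, rfl⟩)
      rw [h2]; omega
  · have hS := one_add_add_pow_le_geom_sum (p ^ d) n
    rcases (show p ^ d = 2 ∨ 3 ≤ p ^ d by omega) with hP | hP
    · have hd1 : d = 1 := by omega
      have hn : n + 2 < 2 ^ (n + 2) := Nat.lt_two_pow_self
      rw [hP] at hS ⊢
      simp only [hd1, Nat.reduceSub, Nat.gcd_one_right, one_mul, mul_one]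
      omega
    · have hg : Nat.gcd (n + 3) (p ^ d - 1) ≤ n + 3 := Nat.gcd_le_left _ (by omega)
      have := mul_sq_lt_pow_add hP h2d n
      calc d * (n + 3) * Nat.gcd (n + 3) (p ^ d - 1) ≤ d * (n + 3) ^ 2 := by
            rw [sq, ← mul_assoc]; exact Nat.mul_le_mul_left _ hg
        _ < _ := by omega

theorem mul_gcd_pow_sub_one_sq_lt {p m i : ℕ} (hp : 2 ≤ p) (hi : 0 < i) (him : i < m)
    (hpm : ¬(p = 3 ∧ m = 2)) :
    m * Nat.gcd (p ^ m - 1) ((p ^ i - 1) ^ 2) < p ^ m - 1 := by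
  have hd1 : 1 ≤ Nat.gcd i m := Nat.gcd_pos_of_pos_left m hi
  have hdm : Nat.gcd i m < m := (Nat.le_of_dvd hi (Nat.gcd_dvd_left i m)).trans_lt him
  obtain ⟨t, hmt⟩ := Nat.gcd_dvd_right i m
  generalize hd : Nat.gcd i m = d at hd1 hdm hmt
  subst hmt
  have ht : 1 < t := Nat.lt_of_mul_lt_mul_left (a := d) (by simpa using hdm)
  have hP : 2 ≤ p ^ d := hp.trans (Nat.le_self_pow (by omega) p)
  have hG := Nat.le_of_dvd (Nat.mul_pos (by omega) (Nat.gcd_pos_of_pos_left _ (by omega)))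
    (gcd_pow_sub_one_sq_dvd p i d t (by omega) hd)
  have hlt := mul_gcd_lt_geom_sum hp hd1 ht (fun h => hpm ⟨h.1, by rw [h.2.1, h.2.2]⟩)
  rw [pow_mul, ← sub_one_mul_geom_sum _ t (by omega)] at hG ⊢
  calc d * t * Nat.gcd ((p ^ d - 1) * _) _ ≤ d * t * ((p ^ d - 1) * Nat.gcd t (p ^ d - 1)) :=
        Nat.mul_le_mul_left _ hG
    _ = (p ^ d - 1) * (d * t * Nat.gcd t (p ^ d - 1)) := by ring
    _ < _ := Nat.mul_lt_mul_of_pos_left hlt (by omega)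

end Nat

lemma pow_sub_one_sq_eq_of_pow_eq {G : Type*} [CommGroup G] {a c : G} {σ τ : ℕ} (hσ : 1 ≤ σ)
    (h : (a * c ^ τ / a ^ σ / c) ^ σ = a * c ^ τ / a ^ σ / c) :
    a ^ (σ - 1) ^ 2 = (c ^ (σ - 1)) ^ τ / c ^ (σ - 1) := by
  obtain ⟨s, rfl⟩ : ∃ s, σ = s + 1 := ⟨σ - 1, by omega⟩
  have hw : a * c ^ τ / a ^ (s + 1) / c = c ^ τ / c / a ^ s := by
    rw [pow_succ', mul_div_mul_left_eq_div, div_div, div_div, mul_comm (a ^ s)]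
  rw [hw, pow_succ, mul_eq_right, div_pow, div_eq_one] at h
  rw [Nat.add_sub_cancel, sq, pow_mul, ← h, div_pow, ← pow_mul, ← pow_mul, mul_comm]

lemma IsCyclic.card_le_card_mul_gcd_of_pow_mem {G : Type*} [CommGroup G] [IsCyclic G] [Finite G]
    {k : ℕ} {s : Finset G} (h : ∀ a : G, a ^ k ∈ s) :
    Nat.card G ≤ s.card * Nat.gcd (Nat.card G) k := by
  have hrange : Nat.card (powMonoidHom k : G →* G).range ≤ s.card := by
    rw [← Nat.card_eq_finsetCard]
    exact Nat.card_mono s.finite_toSet (by rintro _ ⟨a, rfl⟩; exact h a)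
  rw [IsCyclic.card_powMonoidHom_range] at hrange
  calc Nat.card G = Nat.card G / Nat.gcd (Nat.card G) k * Nat.gcd (Nat.card G) k :=
        (Nat.div_mul_cancel (Nat.gcd_dvd_left _ _)).symm
    _ ≤ _ := Nat.mul_le_mul_right _ hrange

section

variable {F : Type*} [Field F] {p : ℕ}

lemma mem_mulMapsSubgroup_iff {e : Equiv.Perm F} :
    e ∈ mulMapsSubgroup F ↔ ∃ c : Fˣ, ∀ x, e x = c * x := by
  refine ⟨fun h => ?_, fun h => Subgroup.subset_closure h⟩
  induction h using Subgroup.closure_induction with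
  | mem g hg => exact hg
  | one => exact ⟨1, by simp⟩
  | mul g h _ _ hg hh =>
    obtain ⟨c, hc⟩ := hg
    obtain ⟨d, hd⟩ := hh
    exact ⟨c * d, fun x => by rw [Equiv.Perm.mul_apply, hd, hc, Units.val_mul, mul_assoc]⟩
  | inv g _ hg =>
    obtain ⟨c, hc⟩ := hg
    exact ⟨c⁻¹, fun x => by rw [Equiv.Perm.inv_eq_iff_eq, hc, ← mul_assoc, Units.mul_inv, one_mul]⟩

lemma commute_of_mem_mulMapsSubgroup {a b : Equiv.Perm F} (ha : a ∈ mulMapsSubgroup F)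
    (hb : b ∈ mulMapsSubgroup F) : a * b = b * a := by
  obtain ⟨c, hc⟩ := mem_mulMapsSubgroup_iff.1 ha
  obtain ⟨d, hd⟩ := mem_mulMapsSubgroup_iff.1 hb
  ext x
  simp only [Equiv.Perm.mul_apply, hc, hd]
  ring

lemma conj_apply_of_eq_mul_pow {g n : Equiv.Perm F} {a c : Fˣ} {i j : ℕ}
    (hg : ∀ x, g x = a * x ^ p ^ j) (hn : ∀ x, n x = c * x ^ p ^ i) (x : F) :
    (g * n * g⁻¹) x = ↑(a * c ^ p ^ j / a ^ p ^ i) * x ^ p ^ i := by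
  obtain ⟨y, rfl⟩ := g.surjective x
  rw [Equiv.Perm.mul_apply, Equiv.Perm.mul_apply,
    show g⁻¹ (g y) = y from Equiv.Perm.inv_eq_iff_eq.2 rfl, hn, hg, hg]
  push_cast
  rw [mul_pow, mul_pow, ← pow_mul, ← pow_mul, mul_comm (p ^ i)]
  field_simp

lemma div_pow_eq_div_of_commute {n k : Equiv.Perm F} {c e : Fˣ} {σ : ℕ}
    (hn : ∀ x, n x = c * x ^ σ) (hk : ∀ x, k x = e * x ^ σ) (h : n * k = k * n) :
    (e / c) ^ σ = e / c := by
  have h1 : n (k 1) = k (n 1) := by rw [← Equiv.Perm.mul_apply, h, Equiv.Perm.mul_apply]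
  simp only [hk, hn, one_pow, mul_one] at h1
  rw [div_pow, div_eq_div_iff_mul_eq_mul]
  ext
  push_cast
  linear_combination h1

variable [Fintype F] {m : ℕ}

lemma pow_pow_mul_eq_self (hF : Fintype.card F = p ^ m) (x : F) (n : ℕ) :
    x ^ p ^ (m * n) = x := by
  rw [pow_mul, ← hF, FiniteField.pow_card_pow]

lemma pow_pow_mod (hF : Fintype.card F = p ^ m) (x : F) (i : ℕ) :
    x ^ p ^ i = x ^ p ^ (i % m) := by
  calc x ^ p ^ i = (x ^ p ^ (m * (i / m))) ^ p ^ (i % m) := by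
        rw [← pow_mul, ← pow_add, Nat.div_add_mod]
    _ = x ^ p ^ (i % m) := by rw [pow_pow_mul_eq_self hF]

def gammaL (hF : Fintype.card F = p ^ m) : Subgroup (Equiv.Perm F) where
  carrier := {g | ∃ (c : Fˣ) (i : ℕ), ∀ x, g x = c * x ^ p ^ i}
  one_mem' := ⟨1, 0, by simp⟩
  mul_mem' := by
    rintro g h ⟨c, i, hg⟩ ⟨d, j, hh⟩
    refine ⟨c * d ^ p ^ i, i + j, fun x => ?_⟩
    rw [Equiv.Perm.mul_apply, hh, hg, mul_pow, ← pow_mul, ← pow_add, add_comm j]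
    push_cast
    ring
  inv_mem' := by
    rintro g ⟨c, i, hg⟩
    obtain ⟨k, rfl⟩ : ∃ k, m = k + 1 := Nat.exists_eq_succ_of_ne_zero <| by
      rintro rfl
      simpa [hF] using (Fintype.one_lt_card : 1 < Fintype.card F)
    refine ⟨c⁻¹ ^ p ^ (k * i), k * i, fun x => ?_⟩
    have hk : k * i + i = (k + 1) * i := by ring
    rw [Equiv.Perm.inv_eq_iff_eq, hg, mul_pow, ← pow_mul, ← pow_add, hk, Units.val_pow_eq_pow_val,
      ← pow_mul, ← pow_add, hk, pow_pow_mul_eq_self hF, pow_pow_mul_eq_self hF, ← mul_assoc,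
      Units.mul_inv, one_mul]

lemma exists_lt_of_mem_gammaL (hF : Fintype.card F = p ^ m) (hm : 0 < m) {g : Equiv.Perm F}
    (hg : g ∈ gammaL hF) : ∃ (c : Fˣ) (i : ℕ), i < m ∧ ∀ x, g x = c * x ^ p ^ i := by
  obtain ⟨c, i, hg⟩ := hg
  exact ⟨c, i % m, Nat.mod_lt i hm, fun x => by rw [hg, pow_pow_mod hF]⟩

lemma closure_le_gammaL (hF : Fintype.card F = p ^ m) (ω : Fˣ) :
    Subgroup.closure {g : Equiv.Perm F | (∀ x, g x = x ^ p) ∨ ∀ x, g x = ω * x} ≤ gammaL hF := by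
  rw [Subgroup.closure_le]
  rintro g (hg | hg)
  · exact ⟨1, 1, by simpa using hg⟩
  · exact ⟨ω, 0, by simpa using hg⟩

lemma conj_mem_mulMapsSubgroup (hF : Fintype.card F = p ^ m) {g n : Equiv.Perm F}
    (hg : g ∈ gammaL hF) (hn : n ∈ mulMapsSubgroup F) : g * n * g⁻¹ ∈ mulMapsSubgroup F := by
  obtain ⟨a, j, hg⟩ := hg
  obtain ⟨c, hn⟩ := mem_mulMapsSubgroup_iff.1 hn
  refine mem_mulMapsSubgroup_iff.2 ⟨a * c ^ p ^ j / a, fun x => ?_⟩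
  simpa using conj_apply_of_eq_mul_pow (i := 0) hg (by simpa using hn) x

theorem mem_mulMapsSubgroup_of_commute_conj (hF : Fintype.card F = p ^ m) (hp : 2 ≤ p)
    (hm : 0 < m) (hpm : ¬(p = 3 ∧ m = 2)) {A : Subgroup (Equiv.Perm F)} (hA : A ≤ gammaL hF)
    (htrans : ∀ a : Fˣ, ∃ g ∈ A, g 1 = a) {n : Equiv.Perm F} (hn : n ∈ gammaL hF)
    (hcomm : ∀ g ∈ A, n * (g * n * g⁻¹) = g * n * g⁻¹ * n) : n ∈ mulMapsSubgroup F := by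
  classical
  obtain ⟨c, i, him, hnc⟩ := exists_lt_of_mem_gammaL hF hm hn
  rcases Nat.eq_zero_or_pos i with rfl | hi
  · exact mem_mulMapsSubgroup_iff.2 ⟨c, by simpa using hnc⟩
  exfalso
  set u := c ^ (p ^ i - 1)
  have hpow : ∀ a : Fˣ, a ^ (p ^ i - 1) ^ 2 ∈ (range m).image fun j => u ^ p ^ j / u := by
    intro a
    obtain ⟨g, hgA, hg1⟩ := htrans a
    obtain ⟨b, j, hjm, hgb⟩ := exists_lt_of_mem_gammaL hF hm (hA hgA)
    obtain rfl : b = a := Units.ext (by simpa [hg1] using (hgb 1).symm)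
    have hfix := div_pow_eq_div_of_commute hnc (conj_apply_of_eq_mul_pow hgb hnc) (hcomm g hgA)
    exact mem_image.2 ⟨j, mem_range.2 hjm,
      (pow_sub_one_sq_eq_of_pow_eq (Nat.one_le_pow _ _ (by omega)) hfix).symm⟩
  have hcard := IsCyclic.card_le_card_mul_gcd_of_pow_mem hpow
  rw [Nat.card_eq_fintype_card, Fintype.card_units, hF] at hcard
  have hlt := Nat.mul_gcd_pow_sub_one_sq_lt hp hi him hpm
  have himage : ((range m).image fun j => u ^ p ^ j / u).card ≤ m :=
    card_image_le.trans_eq (card_range m)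
  exact (hcard.trans (Nat.mul_le_mul_right _ himage)).not_gt hlt

end

theorem abelian_normal_subgroup_of_transitive_gammaL_one_general
    (p m : ℕ) (hp : p.Prime) (hm : 0 < m) (hpm : ¬(p = 3 ∧ m = 2))
    (F : Type*) [Field F] [Fintype F] (hF : Fintype.card F = p ^ m)
    (ω : Fˣ)
    (A N : Subgroup (Equiv.Perm F))
    (hA : A ≤ Subgroup.closure {g : Equiv.Perm F |
        (∀ x : F, g x = x ^ p) ∨ (∀ x : F, g x = (ω : F) * x)})
    (htrans : ∀ x y : F, x ≠ 0 → y ≠ 0 → ∃ g ∈ A, g x = y)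
    (hNA : N ≤ A) (hab : ∀ a ∈ N, ∀ b ∈ N, a * b = b * a)
    (hnorm : ∀ g ∈ A, ∀ nn ∈ N, g * nn * g⁻¹ ∈ N) :
    N ≤ mulMapsSubgroup F ∧
    N ≤ A ⊓ mulMapsSubgroup F ∧
    (∀ a ∈ A ⊓ mulMapsSubgroup F, ∀ b ∈ A ⊓ mulMapsSubgroup F, a * b = b * a) ∧
    (∀ g ∈ A, ∀ nn ∈ A ⊓ mulMapsSubgroup F, g * nn * g⁻¹ ∈ A ⊓ mulMapsSubgroup F) := by
  have hAΓ : A ≤ gammaL hF := hA.trans (closure_le_gammaL hF ω)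
  have hN : N ≤ mulMapsSubgroup F := fun n hn =>
    mem_mulMapsSubgroup_of_commute_conj hF hp.two_le hm hpm hAΓ
      (fun a => htrans 1 a one_ne_zero a.ne_zero) (hAΓ (hNA hn))
      fun g hg => hab n hn _ (hnorm g hg n hn)
  refine ⟨hN, le_inf hNA hN, fun a ha b hb => commute_of_mem_mulMapsSubgroup ha.2 hb.2,
    fun g hg n hn => ⟨A.mul_mem (A.mul_mem hg hn.1) (A.inv_mem hg), ?_⟩⟩
  exact conj_mem_mulMapsSubgroup hF (hAΓ hg) hn.2

/-- For `(p, m) ≠ (3, 2)`, every abelian normal subgroup `N` of a transitive subgroup `A` of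
`ΓL₁(p^m)` consists of multiplication maps; in particular, `A ⊓ mulMapsSubgroup F` is the
unique largest abelian normal subgroup of `A` (it is abelian, normal in `A`, and contains
every abelian normal subgroup of `A`). -/
theorem abelian_normal_subgroup_of_transitive_gammaL_one
    (p m : ℕ) (hp : p.Prime) (hm : 0 < m) (hpm : ¬(p = 3 ∧ m = 2))
    (F : Type*) [Field F] [Fintype F] (hF : Fintype.card F = p ^ m)
    (ω : Fˣ) (hω : ∀ x : Fˣ, x ∈ Subgroup.zpowers ω)
    (A N : Subgroup (Equiv.Perm F))
    (hA : A ≤ Subgroup.closure {g : Equiv.Perm F |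
        (∀ x : F, g x = x ^ p) ∨ (∀ x : F, g x = (ω : F) * x)})
    (htrans : ∀ x y : F, x ≠ 0 → y ≠ 0 → ∃ g ∈ A, g x = y)
    (hNA : N ≤ A) (hab : ∀ a ∈ N, ∀ b ∈ N, a * b = b * a)
    (hnorm : ∀ g ∈ A, ∀ nn ∈ N, g * nn * g⁻¹ ∈ N) :
    N ≤ mulMapsSubgroup F ∧
    N ≤ A ⊓ mulMapsSubgroup F ∧
    (∀ a ∈ A ⊓ mulMapsSubgroup F, ∀ b ∈ A ⊓ mulMapsSubgroup F, a * b = b * a) ∧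
    (∀ g ∈ A, ∀ nn ∈ A ⊓ mulMapsSubgroup F, g * nn * g⁻¹ ∈ A ⊓ mulMapsSubgroup F) :=
  abelian_normal_subgroup_of_transitive_gammaL_one_general p m hp hm hpm F hF ω A N hA htrans hNA
    hab hnorm
end

section
/- Let k and t be natural numbers. Then |β(k + 2^t) − β(k)| ≤ 1, i.e., β(k + 2^t) ≤ β(k) + 1 and β(k) ≤ β(k + 2^t) + 1, where β(k) denotes the number of maximal blocks of consecutive 1's in the binary representation of k. -/
/-!
Reading off the lowest binary digit gives `β(2n) = β(n)` and `β(2n+1) = β(n) + [n even]`.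
Adding `2^(t+1)` to `2q + b` adds `2^t` to `q` and keeps the last digit `b`; for `t ≥ 1` it
also keeps the parity of `q`, so the bound for `t + 1` follows from the bound for `t` at `q`.
The remaining cases come down to adding `1`, where one needs the finer fact that `β(k+1) - β(k)`
lies in `{0, 1}` for even `k` and in `{-1, 0}` for odd `k`; this propagates through the same
recursion.
-/

noncomputable def oneBlocks (k : ℕ) : ℕ :=
  {i : ℕ | k.testBit i = true ∧ k.testBit (i + 1) = false}.ncard

open Classical in
theorem Set.ncard_eq_ncard_preimage_add_one_add {s : Set ℕ} (hs : s.Finite) :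
    s.ncard = ((· + 1) ⁻¹' s).ncard + if 0 ∈ s then 1 else 0 := by
  have hshift : ((· + 1) ⁻¹' s).ncard = (s \ {0}).ncard := by
    rw [← Set.ncard_image_of_injective _ (add_left_injective 1), Set.image_preimage_eq_inter_range]
    congr 1
    ext i
    cases i <;> simp
  rw [hshift]
  split_ifs with h0
  · exact (Set.ncard_sdiff_singleton_add_one h0 hs).symm
  · rw [Set.sdiff_singleton_eq_self h0, add_zero]

def oneBlockEnds (n : ℕ) : Set ℕ := {i | n.testBit i = true ∧ n.testBit (i + 1) = false}

theorem oneBlocks_eq_ncard_oneBlockEnds (n : ℕ) : oneBlocks n = (oneBlockEnds n).ncard := rfl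

theorem finite_oneBlockEnds (n : ℕ) : (oneBlockEnds n).Finite :=
  (Set.finite_Iio n).subset fun i hi =>
    lt_of_lt_of_le i.lt_two_pow_self (Nat.ge_two_pow_of_testBit hi.1)

theorem preimage_add_one_oneBlockEnds (n : ℕ) :
    (· + 1) ⁻¹' oneBlockEnds n = oneBlockEnds (n / 2) := by
  ext i
  simp [oneBlockEnds, Nat.testBit_div_two]

theorem zero_mem_oneBlockEnds_iff (n : ℕ) :
    0 ∈ oneBlockEnds n ↔ n % 2 = 1 ∧ n / 2 % 2 = 0 := by
  simp [oneBlockEnds, ← Nat.testBit_div_two, Nat.testBit_zero]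

theorem oneBlocks_eq_oneBlocks_div_two_add (n : ℕ) :
    oneBlocks n = oneBlocks (n / 2) + if n % 2 = 1 ∧ n / 2 % 2 = 0 then 1 else 0 := by
  rw [oneBlocks_eq_ncard_oneBlockEnds, oneBlocks_eq_ncard_oneBlockEnds,
    Set.ncard_eq_ncard_preimage_add_one_add (finite_oneBlockEnds n),
    preimage_add_one_oneBlockEnds]
  simp only [zero_mem_oneBlockEnds_iff]

theorem oneBlocks_two_mul (n : ℕ) : oneBlocks (2 * n) = oneBlocks n := by
  rw [oneBlocks_eq_oneBlocks_div_two_add]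
  simp

theorem oneBlocks_two_mul_add_one (n : ℕ) :
    oneBlocks (2 * n + 1) + n % 2 = oneBlocks n + 1 := by
  rw [oneBlocks_eq_oneBlocks_div_two_add, show (2 * n + 1) / 2 = n by omega]
  split_ifs <;> omega

-- For even `k` this says `β(k+1) ∈ {β k, β k + 1}`, for odd `k` that `β(k+1) ∈ {β k - 1, β k}`.
theorem oneBlocks_add_one_bounds (k : ℕ) :
    oneBlocks k ≤ oneBlocks (k + 1) + k % 2 ∧ oneBlocks (k + 1) + k % 2 ≤ oneBlocks k + 1 := by
  induction k using Nat.evenOddRec with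
  | h0 =>
    have := oneBlocks_two_mul_add_one 0
    norm_num at this ⊢
    omega
  | h_even n =>
    have := oneBlocks_two_mul_add_one n
    have := oneBlocks_two_mul n
    omega
  | h_odd n ih =>
    have := oneBlocks_two_mul_add_one n
    have := oneBlocks_two_mul (n + 1)
    rw [show 2 * (n + 1) = 2 * n + 1 + 1 by ring] at this
    omega

/-- Adding a power of 2 changes the number of maximal 1-blocks of the binary representation
by at most one: `|β(k + 2^t) - β(k)| ≤ 1`. -/
theorem oneBlocks_add_two_pow
    (k t : ℕ) :
    oneBlocks (k + 2 ^ t) ≤ oneBlocks k + 1 ∧ oneBlocks k ≤ oneBlocks (k + 2 ^ t) + 1 := by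
  induction t generalizing k with
  | zero =>
    have := oneBlocks_add_one_bounds k
    rw [pow_zero]
    omega
  | succ t ih =>
    obtain ⟨q, rfl | rfl⟩ := Nat.even_or_odd' k
    · rw [pow_succ', ← mul_add, oneBlocks_two_mul, oneBlocks_two_mul]
      exact ih q
    · rw [pow_succ', add_right_comm, ← mul_add]
      have hq := oneBlocks_two_mul_add_one q
      have hq' := oneBlocks_two_mul_add_one (q + 2 ^ t)
      rcases t with _ | t
      · have := oneBlocks_add_one_bounds q
        rw [pow_zero] at hq' ⊢
        omega
      · have hpar : (q + 2 ^ (t + 1)) % 2 = q % 2 := by rw [pow_succ]; omega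
        have := ih q
        omega
end
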